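/- arXiv:2203.00284 — 5 statements merged into one kernel-verified Lean document; each statement's English description precedes it below -/
import Mathlib

section
/- Let N be a connected metric graph with covering radius δ > 0 such that every edge has length at most δ. An edge e = (v_a, v_b) is δ-covered by a finite set P of points of N (i.e., every point of e is within distance δ of some point of P) if and only if either P contains a point of e, or max{δ − min_{p∈P} d(v_a,p), 0} + max{δ − min_{p∈P} d(v_b,p), 0} ≥ l_e. -/
open scoped Classical

/-- An abstract metric graph on a metric space `X`: vertices `V`, edges `E` with
endpoints `src`, `tgt`, positive lengths `len`, and an arc-length parametrization
`param e : [0, len e] → X` of each edge.  The metric of `X` is the shortest-path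
metric: distances to a point of an edge from outside its interior are realized
through the edge's endpoints, and every point of `X` lies on some edge. -/
structure MetricGraph (X : Type) [MetricSpace X] where
  V : Set X
  E : Type
  src : E → X
  tgt : E → X
  len : E → ℝ
  len_pos : ∀ e, 0 < len e
  src_mem : ∀ e, src e ∈ V
  tgt_mem : ∀ e, tgt e ∈ V
  param : E → ℝ → X
  param_src : ∀ e, param e 0 = src e
  param_tgt : ∀ e, param e (len e) = tgt e
  param_injOn : ∀ e, Set.InjOn (param e) (Set.Icc 0 (len e))
  param_dist_le : ∀ e, ∀ q ∈ Set.Icc 0 (len e), ∀ q' ∈ Set.Icc 0 (len e),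
      dist (param e q) (param e q') ≤ |q - q'|
  vertex_not_interior : ∀ v ∈ V, ∀ e, v ∉ param e '' Set.Ioo 0 (len e)
  dist_via_endpoints : ∀ (e : E) (x : X), x ∉ param e '' Set.Ioo 0 (len e) →
      ∀ q ∈ Set.Icc 0 (len e),
      dist x (param e q) = min (dist x (src e) + q) (dist x (tgt e) + (len e - q))
  exists_edge : ∀ x : X, ∃ e, ∃ q ∈ Set.Icc 0 (len e), x = param e q

namespace MetricGraph

variable {X : Type} [MetricSpace X]

/-- The continuum of points of an edge. -/
def edgePoints (G : MetricGraph X) (e : G.E) : Set X :=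
  G.param e '' Set.Icc 0 (G.len e)

/-- The interior points of an edge. -/
def edgeInterior (G : MetricGraph X) (e : G.E) : Set X :=
  G.param e '' Set.Ioo 0 (G.len e)

/-- An edge is incident to a node if the node is one of its endpoints. -/
def Incident (G : MetricGraph X) (v : X) (e : G.E) : Prop :=
  G.src e = v ∨ G.tgt e = v

end MetricGraph

/-- `P` δ-covers the set `S`: every point of `S` is within distance `δ` of `P`. -/
def Covers {X : Type} [MetricSpace X] (δ : ℝ) (P S : Set X) : Prop :=
  ∀ x ∈ S, ∃ p ∈ P, dist x p ≤ δ

/-- covering characterization of a single edge (Proposition 1). -/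
theorem edge_cover_iff {X : Type} [MetricSpace X] [ConnectedSpace X]
    (G : MetricGraph X) (δ : ℝ) (hδ : 0 < δ)
    (hlen : ∀ e : G.E, G.len e ≤ δ) (e : G.E)
    (P : Set X) (hPfin : P.Finite) (hPne : P.Nonempty) :
    Covers δ P (G.edgePoints e) ↔
      (∃ p ∈ P, p ∈ G.edgePoints e) ∨
        max (δ - sInf ((fun p => dist (G.src e) p) '' P)) 0 +
            max (δ - sInf ((fun p => dist (G.tgt e) p) '' P)) 0 ≥ G.len e := by
  classical
  have hlenpos := G.len_pos e
  set a := sInf ((fun p => dist (G.src e) p) '' P) with ha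
  set b := sInf ((fun p => dist (G.tgt e) p) '' P) with hb
  have hAne : ((fun p => dist (G.src e) p) '' P).Nonempty := hPne.image _
  have hAfin : ((fun p => dist (G.src e) p) '' P).Finite := hPfin.image _
  have hBne : ((fun p => dist (G.tgt e) p) '' P).Nonempty := hPne.image _
  have hBfin : ((fun p => dist (G.tgt e) p) '' P).Finite := hPfin.image _
  constructor
  · intro hcov
    by_cases hp : ∃ p ∈ P, p ∈ G.edgePoints e
    · exact Or.inl hp
    right
    by_contra hlt
    push_neg at hlt
    set q := (max (δ - a) 0 + (G.len e - max (δ - b) 0)) / 2 with hqdef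
    have hq1 : max (δ - a) 0 < q := by
      rw [hqdef]; linarith
    have hq2 : q < G.len e - max (δ - b) 0 := by
      rw [hqdef]; linarith
    have hqmem : q ∈ Set.Icc 0 (G.len e) := by
      constructor
      · have := le_max_right (δ - a) 0; linarith
      · have := le_max_right (δ - b) 0; linarith
    obtain ⟨p, hpP, hd⟩ := hcov (G.param e q) ⟨q, hqmem, rfl⟩
    have hpnotint : p ∉ G.param e '' Set.Ioo 0 (G.len e) := by
      intro h
      exact hp ⟨p, hpP, Set.image_mono Set.Ioo_subset_Icc_self h⟩
    have hvia := G.dist_via_endpoints e p hpnotint q hqmem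
    rw [dist_comm, hvia] at hd
    have ha_le : a ≤ dist (G.src e) p := csInf_le hAfin.bddBelow ⟨p, hpP, rfl⟩
    have hb_le : b ≤ dist (G.tgt e) p := csInf_le hBfin.bddBelow ⟨p, hpP, rfl⟩
    rcases min_le_iff.mp hd with h1 | h1
    · rw [dist_comm] at h1
      have : q ≤ δ - a := by linarith
      have := le_max_left (δ - a) (0:ℝ)
      linarith
    · rw [dist_comm] at h1
      have : G.len e - q ≤ δ - b := by linarith
      have := le_max_left (δ - b) (0:ℝ)
      linarith
  · rintro h x ⟨q, hq, rfl⟩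
    rcases h with ⟨p, hpP, q0, hq0, hpq⟩ | hge
    · refine ⟨p, hpP, ?_⟩
      rw [← hpq]
      calc dist (G.param e q) (G.param e q0) ≤ |q - q0| :=
            G.param_dist_le e q hq q0 hq0
        _ ≤ G.len e := by
            rw [abs_le]
            exact ⟨by linarith [hq.1, hq.2, hq0.1, hq0.2],
                   by linarith [hq.1, hq.2, hq0.1, hq0.2]⟩
        _ ≤ δ := hlen e
    · have hdsrc : dist (G.param e q) (G.src e) ≤ q := by
        have := G.param_dist_le e q hq 0 ⟨le_refl _, hlenpos.le⟩
        rw [G.param_src] at this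
        simpa [abs_of_nonneg hq.1] using this
      have hdtgt : dist (G.param e q) (G.tgt e) ≤ G.len e - q := by
        have := G.param_dist_le e q hq (G.len e) ⟨hlenpos.le, le_refl _⟩
        rw [G.param_tgt] at this
        have habs : |q - G.len e| = G.len e - q := by
          rw [abs_of_nonpos (by linarith [hq.2])]; ring
        rw [habs] at this; exact this
      rcases le_or_gt q (δ - a) with hqa | hqa
      · obtain ⟨pa, hpaP, hpa⟩ := hAne.csInf_mem hAfin
        have hpa' : dist (G.src e) pa = a := hpa
        refine ⟨pa, hpaP, ?_⟩
        calc dist (G.param e q) pa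
            ≤ dist (G.param e q) (G.src e) + dist (G.src e) pa := dist_triangle _ _ _
          _ = dist (G.param e q) (G.src e) + a := by rw [hpa']
          _ ≤ q + a := by linarith
          _ ≤ δ := by linarith
      · rcases le_or_gt (G.len e - q) (δ - b) with hqb | hqb
        · obtain ⟨pb, hpbP, hpb⟩ := hBne.csInf_mem hBfin
          have hpb' : dist (G.tgt e) pb = b := hpb
          refine ⟨pb, hpbP, ?_⟩
          calc dist (G.param e q) pb
              ≤ dist (G.param e q) (G.tgt e) + dist (G.tgt e) pb := dist_triangle _ _ _
            _ = dist (G.param e q) (G.tgt e) + b := by rw [hpb']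
            _ ≤ (G.len e - q) + b := by linarith
            _ ≤ δ := by linarith
        · exfalso
          rcases max_choice (δ - a) 0 with hm1 | hm1 <;>
            rcases max_choice (δ - b) 0 with hm2 | hm2 <;>
            rw [hm1, hm2] at hge <;> linarith [hq.1, hq.2]
end

section
/- Let N be a connected metric graph, δ > 0, and suppose all edge lengths are at most δ. A finite set P of points of N is a δ-cover of N (every point of C(N) is within distance δ of P) if and only if for each edge e = (v_a, v_b), either P contains a point of e, or max{δ − min_{p∈P} d(v_a,p), 0} + max{δ − min_{p∈P} d(v_b,p), 0} ≥ l_e. -/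
open scoped Classical

/-- a finite set is a δ-cover of the whole network iff the
edge-wise covering condition holds for every edge. -/
theorem cover_iff_forall_edge {X : Type} [MetricSpace X] [ConnectedSpace X]
    (G : MetricGraph X) (δ : ℝ) (hδ : 0 < δ)
    (hlen : ∀ e : G.E, G.len e ≤ δ)
    (P : Set X) (hPfin : P.Finite) (hPne : P.Nonempty) :
    Covers δ P (Set.univ : Set X) ↔
      ∀ e : G.E,
        (∃ p ∈ P, p ∈ G.edgePoints e) ∨
          max (δ - sInf ((fun p => dist (G.src e) p) '' P)) 0 +
              max (δ - sInf ((fun p => dist (G.tgt e) p) '' P)) 0 ≥ G.len e := by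
  constructor
  · intro hcov e
    by_cases hPe : ∃ p ∈ P, p ∈ G.edgePoints e
    · exact Or.inl hPe
    right
    set L := G.len e with hLdef
    set a := sInf ((fun p => dist (G.src e) p) '' P) with hadef
    set b := sInf ((fun p => dist (G.tgt e) p) '' P) with hbdef
    by_contra hlt
    push_neg at hlt
    have hA0 : (0:ℝ) ≤ max (δ - a) 0 := le_max_right _ _
    have hB0 : (0:ℝ) ≤ max (δ - b) 0 := le_max_right _ _
    set q := (max (δ - a) 0 + (L - max (δ - b) 0)) / 2 with hqdef
    have hq1 : max (δ - a) 0 < q := by rw [hqdef]; linarith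
    have hq2 : q < L - max (δ - b) 0 := by rw [hqdef]; linarith
    have hqmem : q ∈ Set.Icc 0 L := ⟨by linarith, by linarith⟩
    obtain ⟨p, hp, hd⟩ := hcov (G.param e q) trivial
    have hpint : p ∉ G.param e '' Set.Ioo 0 L := by
      intro h
      exact hPe ⟨p, hp, Set.image_mono Set.Ioo_subset_Icc_self h⟩
    have hvia := G.dist_via_endpoints e p hpint q hqmem
    have hd' : dist p (G.param e q) ≤ δ := by rwa [dist_comm]
    rw [hvia] at hd'
    have hbdd : BddBelow ((fun p => dist (G.src e) p) '' P) := (hPfin.image _).bddBelow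
    have hbdd' : BddBelow ((fun p => dist (G.tgt e) p) '' P) := (hPfin.image _).bddBelow
    have has : a ≤ dist (G.src e) p := csInf_le hbdd ⟨p, hp, rfl⟩
    have hbs : b ≤ dist (G.tgt e) p := csInf_le hbdd' ⟨p, hp, rfl⟩
    have has' : a ≤ dist p (G.src e) := by rwa [dist_comm]
    have hbs' : b ≤ dist p (G.tgt e) := by rwa [dist_comm]
    rcases min_le_iff.mp hd' with h | h
    · have : q ≤ max (δ - a) 0 := le_trans (by linarith) (le_max_left _ _)
      linarith
    · have : L - q ≤ max (δ - b) 0 := le_trans (by linarith) (le_max_left _ _)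
      linarith
  · intro hcond x _
    obtain ⟨e, q, hqmem, hx⟩ := G.exists_edge x
    by_cases hPe : ∃ p ∈ P, p ∈ G.edgePoints e
    · obtain ⟨p, hp, q', hq', hpq⟩ := hPe
      refine ⟨p, hp, ?_⟩
      rw [hx, ← hpq]
      calc dist (G.param e q) (G.param e q') ≤ |q - q'| :=
            G.param_dist_le e q hqmem q' hq'
        _ ≤ G.len e := abs_sub_le_iff.mpr
            ⟨by linarith [hqmem.1, hqmem.2, hq'.1, hq'.2],
             by linarith [hqmem.1, hqmem.2, hq'.1, hq'.2]⟩
        _ ≤ δ := hlen e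
    have hineq := (hcond e).resolve_left hPe
    set L := G.len e with hLdef
    set a := sInf ((fun p => dist (G.src e) p) '' P) with hadef
    set b := sInf ((fun p => dist (G.tgt e) p) '' P) with hbdef
    have hLpos : 0 < L := G.len_pos e
    have key : (q ≤ δ - a ∧ 0 ≤ δ - a) ∨ (L - q ≤ δ - b ∧ 0 ≤ δ - b) := by
      rcases le_or_gt (δ - a) 0 with h | h
      · have hA : max (δ - a) 0 = 0 := max_eq_right h
        have hB : L ≤ max (δ - b) 0 := by rw [hA] at hineq; linarith
        rcases le_max_iff.mp hB with h2 | h2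
        · exact Or.inr ⟨by linarith [hqmem.1], by linarith⟩
        · linarith
      · rcases le_or_gt (δ - b) 0 with h' | h'
        · have hB : max (δ - b) 0 = 0 := max_eq_right h'
          have hA : L ≤ max (δ - a) 0 := by rw [hB] at hineq; linarith
          rcases le_max_iff.mp hA with h2 | h2
          · exact Or.inl ⟨by linarith [hqmem.2], by linarith⟩
          · linarith
        · have hA : max (δ - a) 0 = δ - a := max_eq_left h.le
          have hB : max (δ - b) 0 = δ - b := max_eq_left h'.le
          rw [hA, hB] at hineq
          rcases le_total q (δ - a) with h2 | h2
          · exact Or.inl ⟨h2, h.le⟩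
          · exact Or.inr ⟨by linarith, h'.le⟩
    rcases key with ⟨h1, _⟩ | ⟨h1, _⟩
    · have hmem : a ∈ (fun p => dist (G.src e) p) '' P :=
        (hPne.image _).csInf_mem (hPfin.image _)
      obtain ⟨pa, hpaP, hpa⟩ := hmem
      have hpaint : pa ∉ G.param e '' Set.Ioo 0 L := by
        intro h
        exact hPe ⟨pa, hpaP, Set.image_mono Set.Ioo_subset_Icc_self h⟩
      refine ⟨pa, hpaP, ?_⟩
      rw [hx, dist_comm, G.dist_via_endpoints e pa hpaint q hqmem]
      have : dist pa (G.src e) = a := by rw [dist_comm]; exact hpa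
      calc min (dist pa (G.src e) + q) (dist pa (G.tgt e) + (L - q))
          ≤ dist pa (G.src e) + q := min_le_left _ _
        _ ≤ δ := by rw [this]; linarith
    · have hmem : b ∈ (fun p => dist (G.tgt e) p) '' P :=
        (hPne.image _).csInf_mem (hPfin.image _)
      obtain ⟨pb, hpbP, hpb⟩ := hmem
      have hpbint : pb ∉ G.param e '' Set.Ioo 0 L := by
        intro h
        exact hPe ⟨pb, hpbP, Set.image_mono Set.Ioo_subset_Icc_self h⟩
      refine ⟨pb, hpbP, ?_⟩
      rw [hx, dist_comm, G.dist_via_endpoints e pb hpbint q hqmem]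
      have : dist pb (G.tgt e) = b := by rw [dist_comm]; exact hpb
      calc min (dist pb (G.src e) + q) (dist pb (G.tgt e) + (L - q))
          ≤ dist pb (G.tgt e) + (L - q) := min_le_right _ _
        _ ≤ δ := by rw [this]; linarith
end

section
/- Let e = (v_a,v_b) and e' = (v'_a,v'_b) be edges of a connected metric graph with all edge lengths at most δ. Suppose every point of e' is within distance δ of v_a and also within distance δ of v_b. Define, for i ∈ {a,b}, r_{v_i}(q) := δ − min{d(v_i,v'_a)+q, d(v_i,v'_b)+l_{e'}−q} and Q_i := (d(v_i,v'_b)+l_{e'}−d(v_i,v'_a))/2. Then every point of e' δ-covers the whole edge e if and only if r_{v_a}(q) + r_{v_b}(q) ≥ l_e for both q = Q_a and q = Q_b. -/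
open scoped Classical

lemma MetricGraph.dist_src_param {X : Type} [MetricSpace X] (G : MetricGraph X) (e : G.E)
    {u : ℝ} (hu : u ∈ Set.Icc 0 (G.len e)) : dist (G.src e) (G.param e u) ≤ u := by
  have h0 : (0:ℝ) ∈ Set.Icc 0 (G.len e) := ⟨le_refl _, (G.len_pos e).le⟩
  have h := G.param_dist_le e 0 h0 u hu
  rw [G.param_src] at h
  calc dist (G.src e) (G.param e u) ≤ |0 - u| := h
    _ = u := by rw [abs_sub_comm, sub_zero, abs_of_nonneg hu.1]

lemma MetricGraph.dist_tgt_param {X : Type} [MetricSpace X] (G : MetricGraph X) (e : G.E)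
    {u : ℝ} (hu : u ∈ Set.Icc 0 (G.len e)) :
    dist (G.tgt e) (G.param e u) ≤ G.len e - u := by
  have hL : G.len e ∈ Set.Icc 0 (G.len e) := ⟨(G.len_pos e).le, le_refl _⟩
  have h := G.param_dist_le e (G.len e) hL u hu
  rw [G.param_tgt] at h
  calc dist (G.tgt e) (G.param e u) ≤ |G.len e - u| := h
    _ = G.len e - u := abs_of_nonneg (by linarith [hu.2])

lemma MetricGraph.dist_src_tgt {X : Type} [MetricSpace X] (G : MetricGraph X) (e : G.E) :
    dist (G.src e) (G.tgt e) ≤ G.len e := by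
  have hL : G.len e ∈ Set.Icc 0 (G.len e) := ⟨(G.len_pos e).le, le_refl _⟩
  have h := G.dist_src_param e hL
  rwa [G.param_tgt] at h

lemma cover_of_sum_le {X : Type} [MetricSpace X] (G : MetricGraph X) (δ : ℝ) (e : G.E)
    {p : X} (h : dist (G.src e) p + dist (G.tgt e) p + G.len e ≤ 2 * δ) :
    Covers δ {p} (G.edgePoints e) := by
  rintro x ⟨u, hu, rfl⟩
  refine ⟨p, Set.mem_singleton p, ?_⟩
  have hs := G.dist_src_param e hu
  have ht := G.dist_tgt_param e hu
  have t1 := dist_triangle (G.param e u) (G.src e) p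
  have t2 := dist_triangle (G.param e u) (G.tgt e) p
  rw [dist_comm (G.param e u) (G.src e)] at t1
  rw [dist_comm (G.param e u) (G.tgt e)] at t2
  rcases le_total (dist (G.src e) p + u) (dist (G.tgt e) p + (G.len e - u)) with hc | hc
  · linarith
  · linarith

lemma sum_le_of_cover {X : Type} [MetricSpace X] (G : MetricGraph X) (δ : ℝ) (e : G.E)
    (hl : G.len e ≤ δ) {p : X} (hcov : Covers δ {p} (G.edgePoints e)) :
    dist (G.src e) p + dist (G.tgt e) p + G.len e ≤ 2 * δ := by
  by_cases hp : p ∈ G.edgePoints e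
  · obtain ⟨u, hu, rfl⟩ := hp
    have hs := G.dist_src_param e hu
    have ht := G.dist_tgt_param e hu
    linarith
  · have hpi : p ∉ G.param e '' Set.Ioo 0 (G.len e) := fun hmem =>
      hp (Set.image_mono Set.Ioo_subset_Icc_self hmem)
    set u := (dist (G.tgt e) p + G.len e - dist (G.src e) p) / 2 with hu_def
    have hst := G.dist_src_tgt e
    have t1 := dist_triangle (G.src e) (G.tgt e) p
    have t2 := dist_triangle (G.tgt e) (G.src e) p
    rw [dist_comm (G.tgt e) (G.src e)] at t2
    have hu : u ∈ Set.Icc 0 (G.len e) := ⟨by rw [hu_def]; linarith, by rw [hu_def]; linarith⟩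
    have hd := G.dist_via_endpoints e p hpi u hu
    obtain ⟨p', hp', hdist⟩ := hcov (G.param e u) ⟨u, hu, rfl⟩
    rw [Set.mem_singleton_iff] at hp'
    rw [hp'] at hdist
    rw [dist_comm] at hdist
    rw [hd] at hdist
    have heq : dist p (G.src e) + u = dist p (G.tgt e) + (G.len e - u) := by
      rw [dist_comm p (G.src e), dist_comm p (G.tgt e), hu_def]; ring
    rw [heq, min_self] at hdist
    have c1 : dist p (G.tgt e) = dist (G.tgt e) p := dist_comm _ _
    linarith

lemma key_min (a1 a2 b1 b2 L q : ℝ) :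
    min (a1 + q) (a2 + (L - q)) + min (b1 + q) (b2 + (L - q)) ≤
      (a1 + a2 + L) / 2 +
        min (b1 + (a2 + L - a1) / 2) (b2 + (L - (a2 + L - a1) / 2)) := by
  rcases le_total q ((a2 + L - a1) / 2) with h | h <;>
    rcases le_total (b1 + (a2 + L - a1) / 2) (b2 + (L - (a2 + L - a1) / 2)) with h2 | h2
  · rw [min_eq_left h2]
    have m1 := min_le_left (a1 + q) (a2 + (L - q))
    have m2 := min_le_left (b1 + q) (b2 + (L - q))
    linarith
  · rw [min_eq_right h2]
    have m1 := min_le_left (a1 + q) (a2 + (L - q))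
    have m2 := min_le_right (b1 + q) (b2 + (L - q))
    linarith
  · rw [min_eq_left h2]
    have m1 := min_le_right (a1 + q) (a2 + (L - q))
    have m2 := min_le_left (b1 + q) (b2 + (L - q))
    linarith
  · rw [min_eq_right h2]
    have m1 := min_le_right (a1 + q) (a2 + (L - q))
    have m2 := min_le_right (b1 + q) (b2 + (L - q))
    linarith

/-- an edge `e'` completely covers an edge `e` iff the covering
condition holds at the two bottleneck coordinates (Proposition 5). -/
theorem complete_cover_iff_bottleneck {X : Type} [MetricSpace X] [ConnectedSpace X]
    (G : MetricGraph X) (δ : ℝ) (hδ : 0 < δ)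
    (hlen : ∀ f : G.E, G.len f ≤ δ) (e e' : G.E)
    (ha : ∀ p ∈ G.edgePoints e', dist (G.src e) p ≤ δ)
    (hb : ∀ p ∈ G.edgePoints e', dist (G.tgt e) p ≤ δ) :
    let L := G.len e'
    let ra : ℝ → ℝ := fun q =>
      δ - min (dist (G.src e) (G.src e') + q) (dist (G.src e) (G.tgt e') + (L - q))
    let rb : ℝ → ℝ := fun q =>
      δ - min (dist (G.tgt e) (G.src e') + q) (dist (G.tgt e) (G.tgt e') + (L - q))
    let Qa := (dist (G.src e) (G.tgt e') + L - dist (G.src e) (G.src e')) / 2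
    let Qb := (dist (G.tgt e) (G.tgt e') + L - dist (G.tgt e) (G.src e')) / 2
    ((∀ p ∈ G.edgePoints e', Covers δ {p} (G.edgePoints e)) ↔
      (ra Qa + rb Qa ≥ G.len e ∧ ra Qb + rb Qb ≥ G.len e)) := by
  intro L ra rb Qa Qb
  have hL_def : L = G.len e' := rfl
  have hQa_def : Qa = (dist (G.src e) (G.tgt e') + L - dist (G.src e) (G.src e')) / 2 := rfl
  have hQb_def : Qb = (dist (G.tgt e) (G.tgt e') + L - dist (G.tgt e) (G.src e')) / 2 := rfl
  have hra : ∀ q : ℝ, ra q =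
      δ - min (dist (G.src e) (G.src e') + q) (dist (G.src e) (G.tgt e') + (L - q)) :=
    fun _ => rfl
  have hrb : ∀ q : ℝ, rb q =
      δ - min (dist (G.tgt e) (G.src e') + q) (dist (G.tgt e) (G.tgt e') + (L - q)) :=
    fun _ => rfl
  have hstL : dist (G.src e') (G.tgt e') ≤ L := G.dist_src_tgt e'
  have hA : ∀ q ∈ Set.Icc 0 (G.len e'), dist (G.src e) (G.param e' q) =
      min (dist (G.src e) (G.src e') + q) (dist (G.src e) (G.tgt e') + (L - q)) :=
    fun q hq => G.dist_via_endpoints e' (G.src e)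
      (G.vertex_not_interior _ (G.src_mem e) e') q hq
  have hB : ∀ q ∈ Set.Icc 0 (G.len e'), dist (G.tgt e) (G.param e' q) =
      min (dist (G.tgt e) (G.src e') + q) (dist (G.tgt e) (G.tgt e') + (L - q)) :=
    fun q hq => G.dist_via_endpoints e' (G.tgt e)
      (G.vertex_not_interior _ (G.tgt_mem e) e') q hq
  have hQa_mem : Qa ∈ Set.Icc 0 (G.len e') := by
    have t1 := dist_triangle (G.src e) (G.tgt e') (G.src e')
    have t2 := dist_triangle (G.src e) (G.src e') (G.tgt e')
    have hc : dist (G.tgt e') (G.src e') = dist (G.src e') (G.tgt e') := dist_comm _ _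
    exact ⟨by linarith, by linarith⟩
  have hQb_mem : Qb ∈ Set.Icc 0 (G.len e') := by
    have t1 := dist_triangle (G.tgt e) (G.tgt e') (G.src e')
    have t2 := dist_triangle (G.tgt e) (G.src e') (G.tgt e')
    have hc : dist (G.tgt e') (G.src e') = dist (G.src e') (G.tgt e') := dist_comm _ _
    exact ⟨by linarith, by linarith⟩
  constructor
  · intro hcov
    have cA := sum_le_of_cover G δ e (hlen e) (hcov (G.param e' Qa) ⟨Qa, hQa_mem, rfl⟩)
    have cB := sum_le_of_cover G δ e (hlen e) (hcov (G.param e' Qb) ⟨Qb, hQb_mem, rfl⟩)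
    have eA1 := hA Qa hQa_mem
    have eA2 := hB Qa hQa_mem
    have eB1 := hA Qb hQb_mem
    have eB2 := hB Qb hQb_mem
    constructor
    · have h1 := hra Qa
      have h2 := hrb Qa
      linarith
    · have h1 := hra Qb
      have h2 := hrb Qb
      linarith
  · rintro ⟨h1, _h2⟩ p hp
    obtain ⟨q, hq, rfl⟩ := hp
    apply cover_of_sum_le
    rw [hA q hq, hB q hq]
    have k := key_min (dist (G.src e) (G.src e')) (dist (G.src e) (G.tgt e'))
      (dist (G.tgt e) (G.src e')) (dist (G.tgt e) (G.tgt e')) L q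
    rw [← hQa_def] at k
    have hAa : min (dist (G.src e) (G.src e') + Qa) (dist (G.src e) (G.tgt e') + (L - Qa)) =
        (dist (G.src e) (G.src e') + dist (G.src e) (G.tgt e') + L) / 2 := by
      have heq : dist (G.src e) (G.src e') + Qa = dist (G.src e) (G.tgt e') + (L - Qa) := by
        rw [hQa_def]; ring
      rw [heq, min_self, hQa_def]; ring
    have hr1 := hra Qa
    have hr2 := hrb Qa
    linarith
end

section
/- Let e = (v_a, v_b) be an edge of a connected metric graph and δ > 0. A single point p ∈ C(N) δ-covers the whole edge e if and only if max{δ − d(v_a,p), 0} + max{δ − d(v_b,p), 0} ≥ l_e or p lies on e (assuming l_e ≤ δ). -/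
open scoped Classical

/-- single-point covering condition for an edge. -/
theorem single_point_cover_iff {X : Type} [MetricSpace X] [ConnectedSpace X]
    (G : MetricGraph X) (δ : ℝ) (hδ : 0 < δ)
    (hlen : ∀ f : G.E, G.len f ≤ δ) (e : G.E) (p : X) :
    Covers δ {p} (G.edgePoints e) ↔
      max (δ - dist (G.src e) p) 0 + max (δ - dist (G.tgt e) p) 0 ≥ G.len e ∨
        p ∈ G.edgePoints e := by
  have hpos := G.len_pos e
  have hle := hlen e
  have easy : p ∈ G.edgePoints e → Covers δ {p} (G.edgePoints e) := by
    rintro ⟨r, hr, rfl⟩ x ⟨q, hq, rfl⟩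
    refine ⟨_, Set.mem_singleton _, ?_⟩
    calc dist (G.param e q) (G.param e r) ≤ |q - r| := G.param_dist_le e q hq r hr
      _ ≤ G.len e := by
          rw [abs_sub_le_iff]
          exact ⟨by linarith [hq.2, hr.1], by linarith [hr.2, hq.1]⟩
      _ ≤ δ := hle
  constructor
  · intro hcov
    by_cases hp : p ∈ G.edgePoints e
    · exact Or.inr hp
    left
    by_contra hlt
    push_neg at hlt
    set s := max (δ - dist (G.src e) p) 0 with hs
    set t := max (δ - dist (G.tgt e) p) 0 with ht
    have hs0 : 0 ≤ s := le_max_right _ _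
    have ht0 : 0 ≤ t := le_max_right _ _
    set q := (s + (G.len e - t)) / 2 with hq
    have hq1 : s < q := by rw [hq]; linarith
    have hq2 : q < G.len e - t := by rw [hq]; linarith
    have hqIcc : q ∈ Set.Icc 0 (G.len e) := ⟨by linarith, by linarith⟩
    obtain ⟨p', hp', hdist⟩ := hcov (G.param e q) ⟨q, hqIcc, rfl⟩
    rw [Set.mem_singleton_iff] at hp'
    rw [hp'] at hdist
    have hni : p ∉ G.param e '' Set.Ioo 0 (G.len e) := fun h =>
      hp (Set.image_mono Set.Ioo_subset_Icc_self h)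
    rw [dist_comm, G.dist_via_endpoints e p hni q hqIcc,
      dist_comm p (G.src e), dist_comm p (G.tgt e)] at hdist
    have h1 : δ - dist (G.src e) p < q := lt_of_le_of_lt (le_max_left _ _) hq1
    have h2 : δ - dist (G.tgt e) p < G.len e - q :=
      lt_of_le_of_lt (le_max_left _ _) (by linarith)
    rcases min_le_iff.mp hdist with h | h <;> linarith
  · rintro (hineq | hmem)
    · by_cases hp : p ∈ G.edgePoints e
      · exact easy hp
      rintro x ⟨q, hq, rfl⟩
      refine ⟨p, Set.mem_singleton _, ?_⟩
      have hni : p ∉ G.param e '' Set.Ioo 0 (G.len e) := fun h =>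
        hp (Set.image_mono Set.Ioo_subset_Icc_self h)
      rw [dist_comm, G.dist_via_endpoints e p hni q hq,
        dist_comm p (G.src e), dist_comm p (G.tgt e)]
      set s := max (δ - dist (G.src e) p) 0 with hs
      set t := max (δ - dist (G.tgt e) p) 0 with ht
      rcases le_or_gt q s with hqs | hqs
      · rcases le_or_gt (δ - dist (G.src e) p) 0 with h0 | h0
        · have hs0 : s = 0 := max_eq_right h0
          have hq0 : q = 0 := le_antisymm (hs0 ▸ hqs) hq.1
          have hlt : G.len e ≤ t := by rw [hs0] at hineq; linarith
          have ht' : G.len e ≤ δ - dist (G.tgt e) p := by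
            rcases le_or_gt (δ - dist (G.tgt e) p) 0 with h1 | h1
            · rw [ht, max_eq_right h1] at hlt; linarith
            · rw [ht, max_eq_left h1.le] at hlt; linarith
          exact le_trans (min_le_right _ _) (by linarith)
        · have hqd : q ≤ δ - dist (G.src e) p := by
            rw [hs, max_eq_left h0.le] at hqs; linarith
          exact le_trans (min_le_left _ _) (by linarith)
      · have hlq : G.len e - q < t := by linarith
        have hb : G.len e - q < δ - dist (G.tgt e) p := by
          rcases le_or_gt (δ - dist (G.tgt e) p) 0 with h1 | h1
          · rw [ht, max_eq_right h1] at hlq; linarith [hq.2]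
          · rw [ht, max_eq_left h1.le] at hlq; linarith
        exact le_trans (min_le_right _ _) (by linarith)
    · exact easy hmem
end

section
/- Consider a path network with 8 nodes v_1,...,v_8 where consecutive nodes are joined by edges of length 1, and let δ = 1.2. Then the minimum δ-cover has exactly 3 points, and there is no optimal δ-cover in which every point is located at a node or at distance exactly δ from some node. -/
open scoped Classical

/-!
A δ-ball in `ℝ` is an interval of length `2δ = 2.4`, and `0`, `3.5`, `7` are pairwise more than
`2.4` apart, so every cover needs three points; `{1.2, 3.5, 5.8}` is one. In a three-point cover
the points covering `0` and `7` cannot reach `2.5` or `4.5`, so the third point is within `1.2` of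
both, i.e. in `[3.3, 3.7]`. But nodes and points at distance `1.2` from a node all have
fractional part `0`, `0.2` or `0.8`.
-/

open Set

lemma ne_of_dist_le_of_lt {X : Type*} [PseudoMetricSpace X] {δ : ℝ} {x y p q : X}
    (hxp : dist x p ≤ δ) (hyq : dist y q ≤ δ) (hxy : 2 * δ < dist x y) : p ≠ q := by
  rintro rfl
  linarith [dist_triangle_right x y p]

lemma Covers.dist_le_of_subset_triple {X : Type} [MetricSpace X] {δ : ℝ} {P S : Set X}
    {a b c x y z : X} (h : Covers δ P S) (hP : P ⊆ {a, b, c})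
    (hxa : dist x a ≤ δ) (hzc : dist z c ≤ δ) (hy : y ∈ S)
    (hxy : 2 * δ < dist x y) (hyz : 2 * δ < dist y z) : dist y b ≤ δ := by
  obtain ⟨q, hq, hyq⟩ := h y hy
  rcases hP hq with rfl | rfl | rfl
  · exact absurd rfl (ne_of_dist_le_of_lt hxa hyq hxy)
  · exact hyq
  · exact absurd rfl (ne_of_dist_le_of_lt hyq hzc hyz)

lemma covers_singleton_Icc {δ a b c : ℝ} (ha : c - δ ≤ a) (hb : b ≤ c + δ) :
    Covers δ {c} (Icc a b) := by
  rintro x ⟨hax, hxb⟩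
  exact ⟨c, rfl, by rw [Real.dist_eq, abs_le]; constructor <;> linarith⟩

lemma Covers.insert_Icc {δ a b c d : ℝ} {P : Set ℝ} (h : Covers δ P (Icc c d))
    (hb : a - δ ≤ b) (hc : c ≤ a + δ) : Covers δ (insert a P) (Icc b d) := by
  rintro x ⟨hbx, hxd⟩
  by_cases hx : x ≤ a + δ
  · exact ⟨a, mem_insert a P, by rw [Real.dist_eq, abs_le]; constructor <;> linarith⟩
  · obtain ⟨p, hp, hxp⟩ := h x ⟨by linarith, hxd⟩
    exact ⟨p, mem_insert_of_mem a hp, hxp⟩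

lemma intCast_add_notMem_Ioo (k n : ℤ) (t : ℝ) :
    (k : ℝ) + t ∉ Ioo ((n : ℝ) + t) (n + 1 + t) := by
  rintro ⟨hnk, hkn⟩
  have : n < k := by exact_mod_cast (by linarith : (n : ℝ) < k)
  have : k < n + 1 := by exact_mod_cast (by linarith : (k : ℝ) < n + 1)
  omega

lemma not_eq_intCast_or_abs_sub_eq_of_mem_Icc {x : ℝ} (hx : x ∈ Icc 3.3 3.7) (k : ℤ) :
    ¬(x = k ∨ |x - k| = 1.2) := by
  obtain ⟨h₁, h₂⟩ := hx
  rintro (rfl | hk)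
  · refine intCast_add_notMem_Ioo k 3 0 ⟨?_, ?_⟩ <;> push_cast <;> linarith
  rcases (abs_eq (by norm_num)).1 hk with hk | hk
  · refine intCast_add_notMem_Ioo k 2 1.2 ⟨?_, ?_⟩ <;> push_cast <;> linarith
  · refine intCast_add_notMem_Ioo k 4 (-1.2) ⟨?_, ?_⟩ <;> push_cast <;> linarith

lemma covers_path : Covers 1.2 ({1.2, 3.5, 5.8} : Set ℝ) (Icc 0 7) :=
  (((covers_singleton_Icc (a := 4.6) (b := 7) (c := 5.8) (by norm_num) (by norm_num)).insert_Icc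
    (a := 3.5) (b := 2.3) (by norm_num) (by norm_num)).insert_Icc (by norm_num) (by norm_num))

lemma exists_three_of_covers_path {P : Set ℝ} (h : Covers 1.2 P (Icc 0 7)) :
    ∃ a ∈ P, ∃ b ∈ P, ∃ c ∈ P,
      dist 0 a ≤ 1.2 ∧ dist 7 c ≤ 1.2 ∧ a ≠ b ∧ a ≠ c ∧ b ≠ c := by
  obtain ⟨a, ha, ha0⟩ := h 0 (by norm_num)
  obtain ⟨b, hb, hbm⟩ := h 3.5 (by norm_num)
  obtain ⟨c, hc, hc7⟩ := h 7 (by norm_num)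
  refine ⟨a, ha, b, hb, c, hc, ha0, hc7, ne_of_dist_le_of_lt ha0 hbm ?_,
    ne_of_dist_le_of_lt ha0 hc7 ?_, ne_of_dist_le_of_lt hbm hc7 ?_⟩ <;>
    norm_num [Real.dist_eq, abs_of_neg, abs_of_pos]

lemma three_le_ncard_of_covers_path {P : Set ℝ} (hP : P.Finite) (h : Covers 1.2 P (Icc 0 7)) :
    3 ≤ P.ncard := by
  obtain ⟨a, ha, b, hb, c, hc, -, -, hab, hac, hbc⟩ := exists_three_of_covers_path h
  exact (two_lt_ncard_iff hP).2 ⟨a, b, c, ha, hb, hc, hab, hac, hbc⟩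

lemma exists_mem_Icc_of_covers_path_of_ncard_eq_three {P : Set ℝ} (hP : P.Finite)
    (h : Covers 1.2 P (Icc 0 7)) (hcard : P.ncard = 3) : ∃ b ∈ P, b ∈ Icc 3.3 3.7 := by
  obtain ⟨a, ha, b, hb, c, hc, ha0, hc7, hab, hac, hbc⟩ := exists_three_of_covers_path h
  have hPabc : P ⊆ {a, b, c} := by
    refine (eq_of_subset_of_ncard_le (by simp [insert_subset_iff, ha, hb, hc]) ?_ hP).ge
    rw [hcard, ncard_eq_three.2 ⟨a, b, c, hab, hac, hbc, rfl⟩]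
  have h25 := h.dist_le_of_subset_triple hPabc ha0 hc7 (y := 2.5) (by norm_num)
    (by norm_num [Real.dist_eq]) (by norm_num [Real.dist_eq, abs_of_neg])
  have h45 := h.dist_le_of_subset_triple hPabc ha0 hc7 (y := 4.5) (by norm_num)
    (by norm_num [Real.dist_eq, abs_of_neg]) (by norm_num [Real.dist_eq, abs_of_neg])
  rw [Real.dist_eq, abs_le] at h25 h45
  exact ⟨b, hb, by constructor <;> linarith [h25.1, h45.2]⟩

/-- on the path `[0,7]` with nodes at integers and `δ = 1.2`,
the minimum δ-cover has exactly 3 points, and no optimal (3-point) δ-cover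
consists only of points at nodes or at distance exactly `δ` from a node. -/
theorem path_network_fds1_fails :
    let IsCover : Set ℝ → Prop := fun P =>
      P ⊆ Set.Icc 0 7 ∧ ∀ x ∈ Set.Icc (0 : ℝ) 7, ∃ p ∈ P, |x - p| ≤ 1.2
    let Cand : Set ℝ :=
      {x | ∃ k : ℤ, 0 ≤ k ∧ k ≤ 7 ∧ (x = (k : ℝ) ∨ |x - (k : ℝ)| = 1.2)}
    (∃ P : Set ℝ, P.Finite ∧ IsCover P ∧ P.ncard = 3) ∧
      (∀ P : Set ℝ, P.Finite → IsCover P → 3 ≤ P.ncard) ∧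
      ¬∃ P : Set ℝ, P.Finite ∧ IsCover P ∧ P.ncard = 3 ∧ P ⊆ Cand := by
  intro IsCover Cand
  refine ⟨⟨{1.2, 3.5, 5.8}, toFinite _, ⟨?_, covers_path⟩, ?_⟩,
    fun P hP hcov => three_le_ncard_of_covers_path hP hcov.2, ?_⟩
  · norm_num [insert_subset_iff]
  · exact ncard_eq_three.2 ⟨1.2, 3.5, 5.8, by norm_num, by norm_num, by norm_num, rfl⟩
  rintro ⟨P, hP, hcov, hcard, hPC⟩
  obtain ⟨b, hb, hb_mem⟩ := exists_mem_Icc_of_covers_path_of_ncard_eq_three hP hcov.2 hcard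
  obtain ⟨k, -, -, hk⟩ := hPC hb
  exact not_eq_intCast_or_abs_sub_eq_of_mem_Icc hb_mem k hk
end
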